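/- arXiv:2408.04359 — 5 statements merged into one kernel-verified Lean document; each statement's English description precedes it below -/
import Mathlib

section
/- Let b : ℝ → ℝ be either the logistic cumulant b(η) = log(1 + exp(η)) or the Poisson cumulant b(η) = exp(η). Then for all η₁, η₂ ∈ ℝ, b''(η₁) / b''(η₂) ≤ exp(3·|η₁ − η₂|). -/
open Real

lemma logistic_deriv1 (b : ℝ → ℝ) (hb : ∀ η, b η = Real.log (1 + Real.exp η)) :
    deriv b = fun η => Real.exp η / (1 + Real.exp η) := by
  funext η
  have hpos : (0:ℝ) < 1 + Real.exp η := by positivity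
  have h : HasDerivAt b (Real.exp η / (1 + Real.exp η)) η := by
    have h1 : HasDerivAt (fun η : ℝ => 1 + Real.exp η) (Real.exp η) η :=
      (Real.hasDerivAt_exp η).const_add 1
    have h2 := h1.log hpos.ne'
    exact h2.congr_of_eventuallyEq (by filter_upwards with x; rw [hb x])
  exact h.deriv

lemma logistic_deriv2 (b : ℝ → ℝ) (hb : ∀ η, b η = Real.log (1 + Real.exp η)) (η : ℝ) :
    deriv (deriv b) η = Real.exp η / (1 + Real.exp η) ^ 2 := by
  rw [logistic_deriv1 b hb]
  have hpos : (0:ℝ) < 1 + Real.exp η := by positivity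
  have h1 : HasDerivAt (fun η : ℝ => 1 + Real.exp η) (Real.exp η) η :=
    (Real.hasDerivAt_exp η).const_add 1
  have h : HasDerivAt (fun η => Real.exp η / (1 + Real.exp η))
      ((Real.exp η * (1 + Real.exp η) - Real.exp η * Real.exp η) / (1 + Real.exp η) ^ 2) η :=
    (Real.hasDerivAt_exp η).div h1 hpos.ne'
  rw [h.deriv]
  ring

lemma key_ineq (x y : ℝ) :
    Real.exp x / (1 + Real.exp x) ^ 2 / (Real.exp y / (1 + Real.exp y) ^ 2)
      ≤ Real.exp (3 * |x - y|) := by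
  set d := |x - y| with hd
  have hdx : x - y ≤ d := le_abs_self _
  have hdy : y - x ≤ d := by rw [hd, abs_sub_comm]; exact le_abs_self _
  have hex : Real.exp x ≤ Real.exp d * Real.exp y := by
    rw [← Real.exp_add]; exact Real.exp_le_exp.2 (by linarith)
  have hey : Real.exp y ≤ Real.exp d * Real.exp x := by
    rw [← Real.exp_add]; exact Real.exp_le_exp.2 (by linarith)
  have h1d : (1:ℝ) ≤ Real.exp d := Real.one_le_exp (abs_nonneg _)
  have hxp := Real.exp_pos x
  have hyp := Real.exp_pos y
  have hdp := Real.exp_pos d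
  have h1 : 1 + Real.exp y ≤ Real.exp d * (1 + Real.exp x) := by nlinarith
  have hpx : (0:ℝ) < 1 + Real.exp x := by positivity
  have hpy : (0:ℝ) < 1 + Real.exp y := by positivity
  have h3 : Real.exp (3 * d) = Real.exp d * Real.exp d * Real.exp d := by
    rw [← Real.exp_add, ← Real.exp_add]; ring_nf
  have heq : Real.exp x / (1 + Real.exp x) ^ 2 / (Real.exp y / (1 + Real.exp y) ^ 2)
      = Real.exp x * (1 + Real.exp y) ^ 2 / ((1 + Real.exp x) ^ 2 * Real.exp y) := by
    field_simp
  rw [heq, div_le_iff₀ (by positivity)]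
  rw [h3]
  nlinarith [sq_nonneg (1 + Real.exp y), mul_pos hpx hpx, mul_pos hpy hpy,
    mul_le_mul h1 h1 hpy.le (by positivity : (0:ℝ) ≤ Real.exp d * (1 + Real.exp x))]

/-- If `b` is either the logistic cumulant `b η = log (1 + exp η)` or the
Poisson cumulant `b η = exp η`, then `b''(η₁) / b''(η₂) ≤ exp (3 * |η₁ - η₂|)` for all
`η₁ η₂ : ℝ`. -/
theorem stmt_0 (b : ℝ → ℝ)
    (hb : (∀ η, b η = Real.log (1 + Real.exp η)) ∨ (∀ η, b η = Real.exp η)) :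
    ∀ η₁ η₂ : ℝ,
      deriv (deriv b) η₁ / deriv (deriv b) η₂ ≤ Real.exp (3 * |η₁ - η₂|) := by
  intro x y
  rcases hb with hb | hb
  · rw [logistic_deriv2 b hb, logistic_deriv2 b hb]
    exact key_ineq x y
  · have hb' : b = Real.exp := funext hb
    subst hb'
    rw [Real.deriv_exp]
    simp only [Real.deriv_exp]
    rw [← Real.exp_sub]
    apply Real.exp_le_exp.2
    have := le_abs_self (x - y)
    nlinarith [abs_nonneg (x - y)]
end

section
/- Let S ⊆ {1,…,p} be nonempty and let θ*_S ∈ ℝ^{|S|} satisfy the score equation ∑_{i=1}^n (b'(x_iᵀθ₀) − b'(x_{i,S}ᵀθ*_S))·x_{i,S} = 0, and suppose the matrix F = ∑_{i=1}^n b''(x_{i,S}ᵀθ*_S)·x_{i,S}x_{i,S}ᵀ is positive definite. Put V = ∑_{i=1}^n b''(x_iᵀθ₀)·x_{i,S}x_{i,S}ᵀ, Δ = λ_max(F^{−1/2} V F^{−1/2}), ζ = max_{1≤i≤n} ‖F^{−1/2} x_{i,S}‖₂, and ξ = F^{−1/2} ∑_{i=1}^n ε_i·x_{i,S}. If ω >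 0 satisfies √2·ω·ζ ≤ (1/2)·√(C_dev·Δ), then for every u ∈ ℝ^{|S|} with ‖u‖₂ = 1 one has P(uᵀξ > √(2·C_dev·Δ·ω²)) ≤ exp(−ω²). -/
/-!
Put `c i = uᵀ F^{-1/2} x_{i,S}`, so that `uᵀξ = ∑ i, c i * ε i` is a weighted sum of independent
centred responses. By the exponential-family form of the moment generating function, the
log-mgf of `c i * ε i` at `t` is `b (η i + t c i) - b (η i) - t c i b' (η i)`, and Taylor's theorem
together with the deviation condition bounds it by `C_dev b'' (η i) (t c i)² / 2` whenever
`|t c i| ≤ 1/2`. Summed over `i` this is `C_dev t² uᵀ F^{-1/2} V F^{-1/2} u / 2 ≤ C_dev Δ t² / 2`.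
By Cauchy–Schwarz `|c i| ≤ ζ`, so the hypothesis on `ω` makes `t = √2 ω / √(C_dev Δ)` admissible,
and the Chernoff bound at this `t` gives `exp (-ω²)`. If `C_dev Δ ≤ 0` the hypothesis forces
`ζ ≤ 0`, hence all `c i = 0` and the event is empty.
-/

open MeasureTheory ProbabilityTheory Matrix Real

/-- Largest eigenvalue of a symmetric real matrix, as the supremum of the Rayleigh quotient
over unit vectors. -/
noncomputable def lamMax {m : Type*} [Fintype m] (A : Matrix m m ℝ) : ℝ :=
  sSup {r : ℝ | ∃ u : m → ℝ, (∑ i, u i ^ 2) = 1 ∧ r = u ⬝ᵥ A.mulVec u}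

open Set

lemma abs_le_one_of_sum_sq_eq_one {m : Type*} [Fintype m] {u : m → ℝ}
    (hu : ∑ i, u i ^ 2 = 1) (j : m) : |u j| ≤ 1 := by
  rw [← sq_le_one_iff_abs_le_one, ← hu]
  exact Finset.single_le_sum (fun i _ => sq_nonneg (u i)) (Finset.mem_univ j)

lemma le_lamMax {m : Type*} [Fintype m] (A : Matrix m m ℝ) {u : m → ℝ}
    (hu : ∑ i, u i ^ 2 = 1) : u ⬝ᵥ A *ᵥ u ≤ lamMax A := by
  refine le_csSup ⟨∑ j, ∑ k, |A j k|, ?_⟩ ⟨u, hu, rfl⟩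
  rintro _ ⟨w, hw, rfl⟩
  simp only [dotProduct, mulVec, Finset.mul_sum]
  gcongr with j _ k _
  calc w j * (A j k * w k) ≤ |w j| * (|A j k| * |w k|) := by
        rw [← abs_mul, ← abs_mul]; exact le_abs_self _
    _ ≤ 1 * (|A j k| * 1) := by
        gcongr
        exacts [abs_le_one_of_sum_sq_eq_one hw j, abs_le_one_of_sum_sq_eq_one hw k]
    _ = |A j k| := by ring

lemma abs_dotProduct_le_sqrt {m : Type*} [Fintype m] {u : m → ℝ} (hu : ∑ i, u i ^ 2 = 1)
    (v : m → ℝ) : |u ⬝ᵥ v| ≤ √(∑ i, v i ^ 2) := by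
  have hCS := Finset.sum_mul_sq_le_sq_mul_sq Finset.univ u v
  rw [hu, one_mul] at hCS
  exact Real.abs_le_sqrt hCS

lemma dotProduct_mulVec_eq_sum_mul_sq {ι m : Type*} [Fintype ι] [Fintype m] {w : ι → ℝ}
    {x : ι → m → ℝ} {V : Matrix m m ℝ} (hV : ∀ j k, V j k = ∑ i, w i * x i j * x i k)
    (v : m → ℝ) : v ⬝ᵥ V *ᵥ v = ∑ i, w i * (x i ⬝ᵥ v) ^ 2 := by
  simp only [dotProduct, mulVec, hV, sq, Finset.mul_sum, Finset.sum_mul]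
  symm
  rw [Finset.sum_comm]
  refine Finset.sum_congr rfl fun j _ => ?_
  rw [Finset.sum_comm]
  exact Finset.sum_congr rfl fun k _ => Finset.sum_congr rfl fun i _ => by ring

lemma sum_mul_sq_eq_dotProduct_mul_mul_mulVec {ι m : Type*} [Fintype ι] [Fintype m] {w : ι → ℝ}
    {x : ι → m → ℝ} {V : Matrix m m ℝ} (hV : ∀ j k, V j k = ∑ i, w i * x i j * x i k)
    {R : Matrix m m ℝ} (hR : R.IsSymm) (u : m → ℝ) :
    ∑ i, w i * (u ⬝ᵥ R *ᵥ x i) ^ 2 = u ⬝ᵥ (R * V * R) *ᵥ u := by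
  have hRu : u ᵥ* R = R *ᵥ u := by rw [← mulVec_transpose, hR.eq]
  rw [← mulVec_mulVec, ← mulVec_mulVec, dotProduct_mulVec u R, hRu,
    dotProduct_mulVec_eq_sum_mul_sq hV]
  refine Finset.sum_congr rfl fun i _ => ?_
  rw [dotProduct_mulVec u R, hRu, dotProduct_comm]

lemma dotProduct_mulVec_sum_smul {ι m : Type*} [Fintype ι] [Fintype m] (u : m → ℝ)
    (R : Matrix m m ℝ) (e : ι → ℝ) (x : ι → m → ℝ) :
    u ⬝ᵥ R *ᵥ (∑ i, e i • x i) = ∑ i, e i * (u ⬝ᵥ R *ᵥ x i) := by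
  simp [mulVec_sum, dotProduct_sum, mulVec_smul, dotProduct_smul]

lemma sub_sub_mul_deriv_le_of_deriv2_le {f : ℝ → ℝ} (hf : ContDiff ℝ 2 f) {s h K : ℝ}
    (hK : ∀ y ∈ uIcc s (s + h), deriv (deriv f) y ≤ K) :
    f (s + h) - f s - h * deriv f s ≤ K * h ^ 2 / 2 := by
  rcases eq_or_ne h 0 with rfl | hh
  · simp
  have hne : s ≠ s + h := by simpa [eq_comm] using hh
  obtain ⟨y, hy, hT⟩ := taylor_mean_remainder_lagrange_iteratedDeriv hne hf.contDiffOn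
  have hderiv : derivWithin f (uIcc s (s + h)) s = deriv f s :=
    (hf.differentiable (by norm_num) s).derivWithin ((uniqueDiffOn_uIcc hne) s left_mem_uIcc)
  norm_num [taylorWithinEval_succ, iteratedDeriv_succ, hderiv] at hT
  nlinarith [sq_nonneg h, hK y (uIoo_subset_uIcc_self hy)]

section Chernoff

variable {Ω : Type*} [MeasurableSpace Ω] {μ : Measure Ω}

lemma exp_mul_const_mul_sub (t c m y : ℝ) :
    exp (t * (c * (y - m))) = exp (-(t * c * m)) * exp (t * c * y) := by
  rw [← exp_add]; ring_nf

variable {b : ℝ → ℝ} {Y : Ω → ℝ} {η : ℝ}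

lemma integrable_exp_const_mul_sub_of_integral_exp_eq
    (hmgf : ∀ t, ∫ ω, exp (t * Y ω) ∂μ = exp (b (η + t) - b η)) (c m t : ℝ) :
    Integrable (fun ω => exp (t * (c * (Y ω - m)))) μ := by
  simp_rw [exp_mul_const_mul_sub]
  refine Integrable.const_mul (Integrable.of_integral_ne_zero ?_) _
  rw [hmgf]
  exact (exp_pos _).ne'

lemma mgf_const_mul_sub_of_integral_exp_eq
    (hmgf : ∀ t, ∫ ω, exp (t * Y ω) ∂μ = exp (b (η + t) - b η)) (c m t : ℝ) :
    mgf (fun ω => c * (Y ω - m)) μ t = exp (b (η + t * c) - b η - t * c * m) := by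
  simp_rw [mgf, exp_mul_const_mul_sub, integral_const_mul, hmgf, ← exp_add]
  ring_nf

lemma mgf_const_mul_sub_deriv_le {C : ℝ} (hb : ContDiff ℝ 2 b)
    (hdev : ∀ s t : ℝ, |t| ≤ 1 / 2 → deriv (deriv b) (s + t) ≤ C * deriv (deriv b) s)
    (hmgf : ∀ t, ∫ ω, exp (t * Y ω) ∂μ = exp (b (η + t) - b η)) {c t : ℝ}
    (htc : |t * c| ≤ 1 / 2) :
    mgf (fun ω => c * (Y ω - deriv b η)) μ t ≤ exp (C * deriv (deriv b) η * (t * c) ^ 2 / 2) := by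
  rw [mgf_const_mul_sub_of_integral_exp_eq hmgf, exp_le_exp]
  refine sub_sub_mul_deriv_le_of_deriv2_le hb fun y hy => ?_
  have hy' : |y - η| ≤ 1 / 2 := by
    simpa using (abs_sub_left_of_mem_uIcc hy).trans (by simpa using htc)
  simpa using hdev η (y - η) hy'

lemma measure_sum_ge_le_exp_of_mgf_le [IsProbabilityMeasure μ] {ι : Type*} [Fintype ι]
    {X : ι → Ω → ℝ} (hmeas : ∀ i, Measurable (X i)) (hindep : iIndepFun X μ) {t : ℝ}
    (ht : 0 ≤ t) (hint : ∀ i, Integrable (fun ω => exp (t * X i ω)) μ) {K : ι → ℝ}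
    (hK : ∀ i, mgf (X i) μ t ≤ exp (K i)) (a : ℝ) :
    μ {ω | a ≤ ∑ i, X i ω} ≤ ENNReal.ofReal (exp (-t * a + ∑ i, K i)) := by
  have hmgf : mgf (∑ i, X i) μ t ≤ exp (∑ i, K i) := by
    rw [hindep.mgf_sum hmeas, exp_sum]
    exact Finset.prod_le_prod (fun i _ => mgf_nonneg) fun i _ => hK i
  have hcher := measure_ge_le_exp_mul_mgf a ht
    (hindep.integrable_exp_mul_sum hmeas (s := Finset.univ) fun i _ => hint i)
  simp only [Finset.sum_apply] at hcher
  rw [← ofReal_measureReal, exp_add]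
  exact ENNReal.ofReal_le_ofReal (hcher.trans (by gcongr))

end Chernoff

theorem measure_sum_mul_centered_gt_le_exp {Ω : Type*} [MeasurableSpace Ω] {μ : Measure Ω}
    [IsProbabilityMeasure μ] {ι : Type*} [Fintype ι]
    {b : ℝ → ℝ} (hb : ContDiff ℝ 2 b) {C : ℝ} (hC : 0 ≤ C)
    (hdev : ∀ s t : ℝ, |t| ≤ 1 / 2 → deriv (deriv b) (s + t) ≤ C * deriv (deriv b) s)
    {Y : ι → Ω → ℝ} (hmeas : ∀ i, Measurable (Y i)) (hindep : iIndepFun Y μ) {η : ι → ℝ}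
    (hmgf : ∀ i t, ∫ ω, exp (t * Y i ω) ∂μ = exp (b (η i + t) - b (η i)))
    {c : ι → ℝ} {ζ Δ τ : ℝ} (hc : ∀ i, |c i| ≤ ζ)
    (hvar : ∑ i, deriv (deriv b) (η i) * c i ^ 2 ≤ Δ) (hτ : 0 < τ)
    (hcond : √2 * τ * ζ ≤ 1 / 2 * √(C * Δ)) :
    μ {ω | √(2 * C * Δ * τ ^ 2) < ∑ i, c i * (Y i ω - deriv b (η i))} ≤
      ENNReal.ofReal (exp (-τ ^ 2)) := by
  rcases le_or_gt (C * Δ) 0 with hdeg | hCΔ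
  · have hζ : ζ ≤ 0 := by
      rw [sqrt_eq_zero'.mpr hdeg, mul_zero] at hcond
      exact nonpos_of_mul_nonpos_right hcond (by positivity)
    have hc0 : ∀ i, c i = 0 := fun i => abs_nonpos_iff.mp ((hc i).trans hζ)
    simp [hc0, not_lt.mpr (sqrt_nonneg _)]
  set t := √2 * τ / √(C * Δ) with ht_def
  have hsqrt : 0 < √(C * Δ) := sqrt_pos.mpr hCΔ
  have ht : 0 < t := by positivity
  have htc : ∀ i, |t * c i| ≤ 1 / 2 := fun i => by
    rw [abs_mul, abs_of_pos ht]
    calc t * |c i| ≤ t * ζ := by gcongr; exact hc i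
      _ ≤ 1 / 2 := by rw [div_mul_eq_mul_div, div_le_iff₀ hsqrt]; linarith
  have ht2 : t ^ 2 * (C * Δ) = 2 * τ ^ 2 := by
    rw [div_pow, mul_pow, sq_sqrt zero_le_two, sq_sqrt hCΔ.le, div_mul_cancel₀ _ hCΔ.ne']
  have hsum : ∑ i, C * deriv (deriv b) (η i) * (t * c i) ^ 2 / 2 ≤ τ ^ 2 :=
    calc ∑ i, C * deriv (deriv b) (η i) * (t * c i) ^ 2 / 2
        = t ^ 2 * C / 2 * ∑ i, deriv (deriv b) (η i) * c i ^ 2 := by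
          rw [Finset.mul_sum]; exact Finset.sum_congr rfl fun i _ => by ring
      _ ≤ t ^ 2 * C / 2 * Δ := by gcongr
      _ = τ ^ 2 := by linear_combination ht2 / 2
  have hta : t * √(2 * C * Δ * τ ^ 2) = 2 * τ ^ 2 := by
    rw [show 2 * C * Δ * τ ^ 2 = 2 * (C * Δ) * τ ^ 2 by ring, sqrt_mul (by positivity),
      sqrt_mul zero_le_two, sqrt_sq hτ.le, ht_def, div_mul_eq_mul_div, div_eq_iff hsqrt.ne']
    linear_combination τ ^ 2 * √(C * Δ) * mul_self_sqrt zero_le_two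
  calc μ {ω | √(2 * C * Δ * τ ^ 2) < ∑ i, c i * (Y i ω - deriv b (η i))}
      ≤ μ {ω | √(2 * C * Δ * τ ^ 2) ≤ ∑ i, c i * (Y i ω - deriv b (η i))} :=
        measure_mono (ofPred_subset_ofPred.mpr fun _ => le_of_lt)
    _ ≤ _ := measure_sum_ge_le_exp_of_mgf_le
        (X := fun i ω => c i * (Y i ω - deriv b (η i)))
        (fun i => ((hmeas i).sub_const _).const_mul _)
        (hindep.comp _ fun i => (measurable_id.sub_const _).const_mul _) ht.le
        (fun i => integrable_exp_const_mul_sub_of_integral_exp_eq (hmgf i) _ _ _)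
        (fun i => mgf_const_mul_sub_deriv_le hb hdev (hmgf i) (htc i)) _
    _ ≤ ENNReal.ofReal (exp (-τ ^ 2)) := by gcongr; linarith

theorem stmt_1_general
    {Ω : Type*} [MeasurableSpace Ω] (μ : Measure Ω) [IsProbabilityMeasure μ]
    (n p : ℕ)
    (x : Fin n → Fin p → ℝ) (θ₀ : Fin p → ℝ)
    -- the cumulant function
    (b : ℝ → ℝ) (hb2 : ContDiff ℝ 2 b)
    (Cdev : ℝ) (hCdev : 1 ≤ Cdev)
    (hdev : ∀ s t : ℝ, |t| ≤ 1 / 2 → deriv (deriv b) (s + t) ≤ Cdev * deriv (deriv b) s)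
    -- the responses: independent, with the exponential-family moment generating function
    (Y : Fin n → Ω → ℝ) (hYmeas : ∀ i, Measurable (Y i))
    (hYindep : iIndepFun Y μ)
    (hmgf : ∀ i : Fin n, ∀ t : ℝ, ∫ ω, Real.exp (t * Y i ω) ∂μ
        = Real.exp (b ((∑ j, x i j * θ₀ j) + t) - b (∑ j, x i j * θ₀ j)))
    -- the model `S`, the best coefficient `θs = θ*_S` solving the score equation
    (S : Finset (Fin p))
    -- the Fisher matrix `F` and the matrix `V`
    (V : Matrix S S ℝ)
    (hV : ∀ j k : S, V j k = ∑ i, deriv (deriv b) (∑ l, x i l * θ₀ l) * x i j.1 * x i k.1)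
    -- `R = F^{-1/2}`
    (R : Matrix S S ℝ) (hRpsd : R.PosSemidef)
    -- `Δ = λ_max (F^{-1/2} V F^{-1/2})`, `ζ = max_i ‖F^{-1/2} x_{i,S}‖₂`
    (Δ ζ ω : ℝ)
    (hΔ : Δ = lamMax (R * V * R))
    (hζ : ζ = ⨆ i : Fin n, Real.sqrt (∑ j : S, (R.mulVec (fun l : S => x i l.1) j) ^ 2))
    (hω : 0 < ω)
    (hcond : Real.sqrt 2 * ω * ζ ≤ (1 / 2) * Real.sqrt (Cdev * Δ)) :
    ∀ u : S → ℝ, (∑ j, u j ^ 2) = 1 →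
      μ {ωs | Real.sqrt (2 * Cdev * Δ * ω ^ 2)
          < ∑ j : S, u j * R.mulVec
              (fun k : S => ∑ i, (Y i ωs - deriv b (∑ l, x i l * θ₀ l)) * x i k.1) j}
        ≤ ENNReal.ofReal (Real.exp (-ω ^ 2)) := by
  intro u hu
  set xS : Fin n → S → ℝ := fun i k => x i k.1
  set η : Fin n → ℝ := fun i => ∑ l, x i l * θ₀ l
  have hξ : ∀ ωs, ∑ j : S, u j * R.mulVec (fun k : S => ∑ i, (Y i ωs - deriv b (η i)) * xS i k) j
      = ∑ i, (u ⬝ᵥ R *ᵥ xS i) * (Y i ωs - deriv b (η i)) := fun ωs => by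
    have hsum : (fun k : S => ∑ i, (Y i ωs - deriv b (η i)) * xS i k)
        = ∑ i, (Y i ωs - deriv b (η i)) • xS i := by
      ext k; simp [Finset.sum_apply]
    change u ⬝ᵥ R *ᵥ _ = _
    rw [hsum, dotProduct_mulVec_sum_smul]
    exact Finset.sum_congr rfl fun i _ => mul_comm _ _
  have hc : ∀ i, |u ⬝ᵥ R *ᵥ xS i| ≤ ζ := fun i =>
    (abs_dotProduct_le_sqrt hu _).trans
      (hζ ▸ le_ciSup (f := fun i => √(∑ j, (R *ᵥ xS i) j ^ 2)) (finite_range _).bddAbove i)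
  have hvar : ∑ i, deriv (deriv b) (η i) * (u ⬝ᵥ R *ᵥ xS i) ^ 2 ≤ Δ := by
    rw [sum_mul_sq_eq_dotProduct_mul_mul_mulVec hV (isHermitian_iff_isSymm.mp hRpsd.isHermitian),
      hΔ]
    exact le_lamMax _ hu
  convert measure_sum_mul_centered_gt_le_exp hb2 (by linarith) hdev hYmeas hYindep hmgf hc hvar hω
    hcond using 4 with ωs
  exact iff_of_eq (congrArg _ (hξ ωs))

/-- deviation of the normalized score function in a GLM with fixed design.
Here `R` plays the role of `F^{-1/2}`: it is the unique positive semidefinite matrix with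
`R * F * R = 1`. -/
theorem stmt_1
    {Ω : Type*} [MeasurableSpace Ω] (μ : Measure Ω) [IsProbabilityMeasure μ]
    (n p : ℕ) (hn : 1 ≤ n)
    (x : Fin n → Fin p → ℝ) (θ₀ : Fin p → ℝ)
    -- the cumulant function
    (b : ℝ → ℝ) (hb2 : ContDiff ℝ 2 b) (hbconv : StrictConvexOn ℝ Set.univ b)
    (Cdev : ℝ) (hCdev : 1 ≤ Cdev)
    (hdev : ∀ s t : ℝ, |t| ≤ 1 / 2 → deriv (deriv b) (s + t) ≤ Cdev * deriv (deriv b) s)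
    -- the responses: independent, with the exponential-family moment generating function
    (Y : Fin n → Ω → ℝ) (hYmeas : ∀ i, Measurable (Y i))
    (hYindep : iIndepFun Y μ)
    (hmgf : ∀ i : Fin n, ∀ t : ℝ, ∫ ω, Real.exp (t * Y i ω) ∂μ
        = Real.exp (b ((∑ j, x i j * θ₀ j) + t) - b (∑ j, x i j * θ₀ j)))
    -- the model `S`, the best coefficient `θs = θ*_S` solving the score equation
    (S : Finset (Fin p)) (hS : S.Nonempty)
    (θs : S → ℝ)
    (hscore : ∀ k : S, ∑ i,
        (deriv b (∑ j, x i j * θ₀ j) - deriv b (∑ j : S, x i j.1 * θs j)) * x i k.1 = 0)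
    -- the Fisher matrix `F` and the matrix `V`
    (F V : Matrix S S ℝ)
    (hF : ∀ j k : S, F j k = ∑ i, deriv (deriv b) (∑ l : S, x i l.1 * θs l) * x i j.1 * x i k.1)
    (hV : ∀ j k : S, V j k = ∑ i, deriv (deriv b) (∑ l, x i l * θ₀ l) * x i j.1 * x i k.1)
    (hFpd : F.PosDef)
    -- `R = F^{-1/2}`
    (R : Matrix S S ℝ) (hRpsd : R.PosSemidef) (hR : R * F * R = 1)
    -- `Δ = λ_max (F^{-1/2} V F^{-1/2})`, `ζ = max_i ‖F^{-1/2} x_{i,S}‖₂`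
    (Δ ζ ω : ℝ)
    (hΔ : Δ = lamMax (R * V * R))
    (hζ : ζ = ⨆ i : Fin n, Real.sqrt (∑ j : S, (R.mulVec (fun l : S => x i l.1) j) ^ 2))
    (hω : 0 < ω)
    (hcond : Real.sqrt 2 * ω * ζ ≤ (1 / 2) * Real.sqrt (Cdev * Δ)) :
    ∀ u : S → ℝ, (∑ j, u j ^ 2) = 1 →
      μ {ωs | Real.sqrt (2 * Cdev * Δ * ω ^ 2)
          < ∑ j : S, u j * R.mulVec
              (fun k : S => ∑ i, (Y i ωs - deriv b (∑ l, x i l * θ₀ l)) * x i k.1) j}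
        ≤ ENNReal.ofReal (Real.exp (-ω ^ 2)) :=
  stmt_1_general μ n p x θ₀ b hb2 Cdev hCdev hdev Y hYmeas hYindep hmgf S V hV R hRpsd Δ ζ ω hΔ hζ
    hω hcond
end

section
/- Let S ⊆ {1,…,p} be nonempty, let θ*_S ∈ ℝ^{|S|}, and suppose F = F_{n,θ*_S} is positive definite. For R > 0 let Θ_S(R) = {θ_S ∈ ℝ^{|S|} : ‖F^{1/2}(θ_S − θ*_S)‖₂ ≤ R}, ζ = max_{1≤i≤n} ‖F^{−1/2}x_{i,S}‖₂, and δ̄ = (sup_{θ_S ∈ Θ_S(R)} max_{1≤i≤n} exp(3·|x_{i,S}ᵀ(θ_S − θ*_S)|))·ζ·R. Then for every θ_S ∈ Θ_S(R): (1 − δ̄)·F ⪯ F_{n,θ_S} ⪯ (1 + δ̄)·F in the Loewner order (i.e., the differences are positive semidefinite). -/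
/-!
For `θ` in the ellipsoid, Cauchy–Schwarz for the inner product defined by `F = F(θ*)` gives
`|x_iᵀ(θ - θ*)| ≤ √(x_iᵀ F⁻¹ x_i) R ≤ ζ R`. Since `|b'''| ≤ b''` and
`b''(η₁) ≤ exp (3|η₁ - η₂|) b''(η₂)`, the mean value theorem bounds
`|b''(x_iᵀθ) - b''(x_iᵀθ*)|` by `|x_iᵀ(θ - θ*)| exp (3|x_iᵀ(θ - θ*)|) b''(x_iᵀθ*) ≤ δ̄ b''(x_iᵀθ*)`.
Hence `F(θ) - (1 - δ̄) F` and `(1 + δ̄) F - F(θ)` are sums `∑ wᵢ xᵢxᵢᵀ` with weights `wᵢ ≥ 0`.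
-/

open Matrix Real

theorem Matrix.PosSemidef.dotProduct_mulVec_sq_le {κ : Type*} [Fintype κ] {M : Matrix κ κ ℝ}
    (hM : M.PosSemidef) (u v : κ → ℝ) :
    (u ⬝ᵥ M *ᵥ v) ^ 2 ≤ (u ⬝ᵥ M *ᵥ u) * (v ⬝ᵥ M *ᵥ v) := by
  let _ := M.toSeminormedAddCommGroup hM
  let _ := M.toInnerProductSpace hM
  have hinner : ∀ a b : κ → ℝ, (inner ℝ a b : ℝ) = a ⬝ᵥ M *ᵥ b := fun a b => by
    show (M *ᵥ b) ⬝ᵥ star a = _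
    rw [star_trivial, dotProduct_comm]
  simpa only [hinner, sq] using real_inner_mul_inner_self_le u v

theorem Matrix.PosDef.abs_dotProduct_le {κ : Type*} [Fintype κ] [DecidableEq κ]
    {M : Matrix κ κ ℝ} (hM : M.PosDef) (w v : κ → ℝ) :
    |w ⬝ᵥ v| ≤ √(w ⬝ᵥ M⁻¹ *ᵥ w) * √(v ⬝ᵥ M *ᵥ v) := by
  have hw : M *ᵥ (M⁻¹ *ᵥ w) = w := by
    rw [mulVec_mulVec, mul_nonsing_inv _ (isUnit_iff_ne_zero.mpr hM.det_pos.ne'), one_mulVec]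
  have hwv : w ⬝ᵥ v = (M⁻¹ *ᵥ w) ⬝ᵥ M *ᵥ v := by
    rw [dotProduct_mulVec, ← mulVec_transpose, ← conjTranspose_eq_transpose_of_trivial,
      hM.isHermitian.eq, hw]
  have hww : (M⁻¹ *ᵥ w) ⬝ᵥ M *ᵥ (M⁻¹ *ᵥ w) = w ⬝ᵥ M⁻¹ *ᵥ w := by
    rw [hw, dotProduct_comm]
  have hv : 0 ≤ v ⬝ᵥ M *ᵥ v := by simpa using hM.posSemidef.dotProduct_mulVec_nonneg v
  rw [← sqrt_mul' _ hv, ← sqrt_sq_eq_abs, hwv, ← hww]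
  exact sqrt_le_sqrt (hM.posSemidef.dotProduct_mulVec_sq_le _ _)

theorem abs_sub_le_mul_exp_mul_of_abs_deriv_le {g : ℝ → ℝ} {c : ℝ} (hc : 0 ≤ c)
    (hg : Differentiable ℝ g) (hg' : ∀ y, |deriv g y| ≤ g y)
    (hratio : ∀ y z, g y ≤ exp (c * |y - z|) * g z) (y z : ℝ) :
    |g y - g z| ≤ |y - z| * exp (c * |y - z|) * g z := by
  have hbound : ∀ t ∈ Set.uIcc z y, ‖deriv g t‖ ≤ exp (c * |y - z|) * g z := fun t ht => by
    have hdist : |t - z| ≤ |y - z| := Set.abs_sub_left_of_mem_uIcc ht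
    calc ‖deriv g t‖ ≤ g t := hg' t
      _ ≤ exp (c * |t - z|) * g z := hratio t z
      _ ≤ exp (c * |y - z|) * g z := by
        gcongr
        exact (abs_nonneg _).trans (hg' z)
  have hmvt := (convex_uIcc z y).norm_image_sub_le_of_norm_deriv_le (fun t _ => hg t) hbound
    Set.left_mem_uIcc Set.right_mem_uIcc
  rw [Real.norm_eq_abs, Real.norm_eq_abs] at hmvt
  linarith

theorem Matrix.posSemidef_of_eq_sum_mul_mul {ι κ : Type*} [Fintype ι] [Fintype κ]
    {M : Matrix κ κ ℝ} (a : ι → ℝ) (x : ι → κ → ℝ) (ha : ∀ i, 0 ≤ a i)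
    (hM : ∀ j k, M j k = ∑ i, a i * x i j * x i k) : M.PosSemidef := by
  have hsum : M = ∑ i, a i • vecMulVec (x i) (x i) := by
    ext j k
    simp [hM, Matrix.sum_apply, vecMulVec_apply, mul_assoc]
  rw [hsum]
  exact posSemidef_sum _ fun i _ => by
    simpa using (posSemidef_vecMulVec_self_star (x i)).smul (ha i)

theorem Matrix.posSemidef_sub_smul_of_abs_sub_le {ι κ : Type*} [Fintype ι] [Fintype κ]
    {A C : Matrix κ κ ℝ} {a c : ι → ℝ} {x : ι → κ → ℝ} {δ : ℝ}
    (hA : ∀ j k, A j k = ∑ i, a i * x i j * x i k)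
    (hC : ∀ j k, C j k = ∑ i, c i * x i j * x i k) (h : ∀ i, |a i - c i| ≤ δ * c i) :
    (A - (1 - δ) • C).PosSemidef ∧ ((1 + δ) • C - A).PosSemidef := by
  constructor
  · refine posSemidef_of_eq_sum_mul_mul (fun i => a i - (1 - δ) * c i) x
      (fun i => by linarith [(abs_le.mp (h i)).1]) fun j k => ?_
    simp only [sub_apply, smul_apply, smul_eq_mul, hA, hC, Finset.mul_sum,
      ← Finset.sum_sub_distrib]
    exact Finset.sum_congr rfl fun i _ => by ring
  · refine posSemidef_of_eq_sum_mul_mul (fun i => (1 + δ) * c i - a i) x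
      (fun i => by linarith [(abs_le.mp (h i)).2]) fun j k => ?_
    simp only [sub_apply, smul_apply, smul_eq_mul, hA, hC, Finset.mul_sum,
      ← Finset.sum_sub_distrib]
    exact Finset.sum_congr rfl fun i _ => by ring

theorem le_iSup_subtype_iSup {α ι : Type*} [Finite ι] {P : α → Prop} (f : α → ι → ℝ) {C : ℝ}
    (hf : ∀ a, P a → ∀ i, f a i ≤ C) {a : α} (ha : P a) (i : ι) :
    f a i ≤ ⨆ a : {a // P a}, ⨆ i, f a.1 i := by
  refine (le_ciSup (Set.finite_range _).bddAbove i).trans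
    (le_ciSup (f := fun a : {a // P a} => ⨆ i, f a.1 i) ⟨max C 0, ?_⟩ ⟨a, ha⟩)
  rintro _ ⟨a', rfl⟩
  exact Real.iSup_le (fun i => (hf a' a'.2 i).trans (le_max_left _ _)) (le_max_right _ _)

/-- `Θ_S(R)` is encoded by `(θs - θ*) ⬝ᵥ F(θ*)·(θs - θ*) ≤ R²`, i.e.
`‖F(θ*)^{1/2}(θs - θ*)‖₂ ≤ R`, and `ζ = max_i ‖F(θ*)^{-1/2} x_{i,S}‖₂` by
`ζ = max_i √(x_{i,S}ᵀ F(θ*)⁻¹ x_{i,S})`. -/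
theorem stmt_3_general
    (n p : ℕ)
    (x : Fin n → Fin p → ℝ)
    -- the cumulant function: three times differentiable, `b'' > 0`, `|b'''| ≤ b''`,
    -- and `b''(η₁) ≤ exp (3|η₁ - η₂|) b''(η₂)`
    (b : ℝ → ℝ) (hb3 : ContDiff ℝ 3 b)
    (hb3bound : ∀ η, |deriv (deriv (deriv b)) η| ≤ deriv (deriv b) η)
    (hbratio : ∀ η₁ η₂, deriv (deriv b) η₁ ≤ Real.exp (3 * |η₁ - η₂|) * deriv (deriv b) η₂)
    -- the model `S` and `θ* = θ*_S`
    (S : Finset (Fin p))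
    (θstar : S → ℝ)
    -- the Fisher matrices
    (F : (S → ℝ) → Matrix S S ℝ)
    (hFdef : ∀ (θs : S → ℝ) (j k : S),
      F θs j k = ∑ i, deriv (deriv b) (∑ l : S, x i l.1 * θs l) * x i j.1 * x i k.1)
    (hFpd : (F θstar).PosDef)
    (R ζ δ : ℝ) (hR : 0 < R)
    (hζ : ζ = ⨆ i : Fin n,
      Real.sqrt ((fun l : S => x i l.1) ⬝ᵥ (F θstar)⁻¹.mulVec fun l : S => x i l.1))
    (hδ : δ = (⨆ θs : {v : S → ℝ //
          (fun j => v j - θstar j) ⬝ᵥ (F θstar).mulVec (fun j => v j - θstar j) ≤ R ^ 2},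
        ⨆ i : Fin n, Real.exp (3 * |∑ l : S, x i l.1 * (θs.1 l - θstar l)|)) * ζ * R) :
    ∀ θs : S → ℝ,
      (fun j => θs j - θstar j) ⬝ᵥ (F θstar).mulVec (fun j => θs j - θstar j) ≤ R ^ 2 →
      (F θs - (1 - δ) • F θstar).PosSemidef ∧ ((1 + δ) • F θstar - F θs).PosSemidef := by
  intro θs hθ
  have hg : Differentiable ℝ (deriv (deriv b)) :=
    (hb3.iterate_deriv' 1 2).differentiable one_ne_zero
  have hlin : ∀ θ' : S → ℝ,
      (fun j => θ' j - θstar j) ⬝ᵥ (F θstar).mulVec (fun j => θ' j - θstar j) ≤ R ^ 2 →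
      ∀ i, |∑ l : S, x i l.1 * (θ' l - θstar l)| ≤ ζ * R := fun θ' hθ' i =>
    calc _ ≤ _ := hFpd.abs_dotProduct_le (fun l => x i l.1) (fun j => θ' j - θstar j)
      _ ≤ ζ * R := mul_le_mul_of_nonneg
          (by rw [hζ]; exact le_ciSup_of_le (Set.finite_range _).bddAbove i le_rfl)
          ((sqrt_le_sqrt hθ').trans_eq (sqrt_sq hR.le)) (sqrt_nonneg _) hR.le
  have hδi : ∀ i, |∑ l : S, x i l.1 * (θs l - θstar l)| *
      exp (3 * |∑ l : S, x i l.1 * (θs l - θstar l)|) ≤ δ := fun i => by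
    rw [hδ, mul_assoc, mul_comm _ (ζ * R)]
    refine mul_le_mul (hlin θs hθ i) ?_ (exp_pos _).le ((abs_nonneg _).trans (hlin θs hθ i))
    exact le_iSup_subtype_iSup
      (fun (θ' : S → ℝ) i => exp (3 * |∑ l : S, x i l.1 * (θ' l - θstar l)|))
      (C := exp (3 * (ζ * R))) (fun θ' hθ' i => exp_le_exp.mpr (by linarith [hlin θ' hθ' i])) hθ i
  refine posSemidef_sub_smul_of_abs_sub_le (hFdef θs) (hFdef θstar) fun i => ?_
  have hη : ∑ l : S, x i l.1 * θs l - ∑ l : S, x i l.1 * θstar l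
      = ∑ l : S, x i l.1 * (θs l - θstar l) := by
    simp only [mul_sub, Finset.sum_sub_distrib]
  calc _ ≤ _ := abs_sub_le_mul_exp_mul_of_abs_deriv_le zero_le_three hg hb3bound hbratio _ _
    _ ≤ δ * deriv (deriv b) (∑ l : S, x i l.1 * θstar l) := by
      rw [hη]
      exact mul_le_mul_of_nonneg_right (hδi i) ((abs_nonneg _).trans (hb3bound _))

/-- smoothness of the Fisher information operator.  The Fisher matrix at
`θs` is `F θs`; `Θ_S(R)` is encoded by the quadratic-form condition
`(θs - θ*) ⬝ᵥ F(θ*)·(θs - θ*) ≤ R²` (which is exactly `‖F(θ*)^{1/2}(θs - θ*)‖₂² ≤ R²`), and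
`ζ = max_i ‖F(θ*)^{-1/2} x_{i,S}‖₂` is encoded via `ζ = max_i √(x_{i,S}ᵀ F(θ*)⁻¹ x_{i,S})`. -/
theorem stmt_3
    (n p : ℕ) (hn : 1 ≤ n)
    (x : Fin n → Fin p → ℝ)
    -- the cumulant function: three times differentiable, `b'' > 0`, `|b'''| ≤ b''`,
    -- and `b''(η₁) ≤ exp (3|η₁ - η₂|) b''(η₂)`
    (b : ℝ → ℝ) (hb3 : ContDiff ℝ 3 b)
    (hbpos : ∀ η, 0 < deriv (deriv b) η)
    (hb3bound : ∀ η, |deriv (deriv (deriv b)) η| ≤ deriv (deriv b) η)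
    (hbratio : ∀ η₁ η₂, deriv (deriv b) η₁ ≤ Real.exp (3 * |η₁ - η₂|) * deriv (deriv b) η₂)
    -- the model `S` and `θ* = θ*_S`
    (S : Finset (Fin p)) (hS : S.Nonempty)
    (θstar : S → ℝ)
    -- the Fisher matrices
    (F : (S → ℝ) → Matrix S S ℝ)
    (hFdef : ∀ (θs : S → ℝ) (j k : S),
      F θs j k = ∑ i, deriv (deriv b) (∑ l : S, x i l.1 * θs l) * x i j.1 * x i k.1)
    (hFpd : (F θstar).PosDef)
    (R ζ δ : ℝ) (hR : 0 < R)
    (hζ : ζ = ⨆ i : Fin n,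
      Real.sqrt ((fun l : S => x i l.1) ⬝ᵥ (F θstar)⁻¹.mulVec fun l : S => x i l.1))
    (hδ : δ = (⨆ θs : {v : S → ℝ //
          (fun j => v j - θstar j) ⬝ᵥ (F θstar).mulVec (fun j => v j - θstar j) ≤ R ^ 2},
        ⨆ i : Fin n, Real.exp (3 * |∑ l : S, x i l.1 * (θs.1 l - θstar l)|)) * ζ * R) :
    ∀ θs : S → ℝ,
      (fun j => θs j - θstar j) ⬝ᵥ (F θstar).mulVec (fun j => θs j - θstar j) ≤ R ^ 2 →
      (F θs - (1 - δ) • F θstar).PosSemidef ∧ ((1 + δ) • F θstar - F θs).PosSemidef :=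
  stmt_3_general n p x b hb3 hb3bound hbratio S θstar F hFdef hFpd R ζ δ hR hζ hδ
end

section
/- If Y is a Poisson random variable with mean μ > 0, then ‖Y − μ‖_{ψ₁} ≤ (1 + 2/(e·log 2))·(1 + μ/log 2). If Y is a Bernoulli random variable with success probability q ∈ [0,1], then ‖Y − q‖_{ψ₁} ≤ (1 + 2/(e·log 2))·(1 + q·(1−q)/log 2). -/
/-!
For a Poisson variable `Y` with mean `r` and `a = 1/K`, the pointwise bound
`e^{a|y-r|} ≤ e^{a(y-r)} + e^{-a(y-r)} - e^{-a(y+r)}` (valid for `y, r ≥ 0`) and the moment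
generating function `E e^{tY} = e^{r(e^t-1)}` reduce `E e^{|Y-r|/K} ≤ 2` to an inequality between
three explicit exponentials. The subtracted term is what makes this work: the two-sided bound
`E e^{a(Y-r)} + E e^{-a(Y-r)}` alone is at least `2` by Jensen's inequality. The inequality holds once `K ≥ 2` and
`r ≤ 7K/20`, and both follow from `e log 2 ≤ 2` and `log 2 < 7/10`.
A centred Bernoulli variable is bounded by `1 ≤ K log 2`, so `e^{|Y-q|/K} ≤ 2` pointwise.
-/

open MeasureTheory ProbabilityTheory Real ENNReal

/-- The `ψ₁` (sub-exponential) Orlicz norm `‖Z‖_{ψ₁} = inf {K > 0 : E[exp(|Z|/K) − 1] ≤ 1}`,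
valued in `ℝ≥0∞` so that `inf ∅ = ∞`. -/
noncomputable def psi1Norm {Ω : Type*} [MeasurableSpace Ω] (μ : Measure Ω) (Z : Ω → ℝ) :
    ℝ≥0∞ :=
  sInf {K : ℝ≥0∞ | 0 < K ∧ K ≠ ⊤ ∧
    ∫⁻ ω, ENNReal.ofReal (Real.exp (|Z ω| / K.toReal) - 1) ∂μ ≤ 1}

open scoped NNReal Nat

section Psi1Norm

variable {Ω : Type*} [MeasurableSpace Ω] {μ : Measure Ω}

theorem psi1Norm_le_ofReal {Z : Ω → ℝ} {K : ℝ} (hK : 0 < K)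
    (h : ∫⁻ ω, ENNReal.ofReal (exp (|Z ω| / K) - 1) ∂μ ≤ 1) :
    psi1Norm μ Z ≤ ENNReal.ofReal K :=
  sInf_le ⟨ENNReal.ofReal_pos.2 hK, ENNReal.ofReal_ne_top, by rwa [ENNReal.toReal_ofReal hK.le]⟩

theorem psi1Norm_le_of_abs_le [IsProbabilityMeasure μ] {Z : Ω → ℝ} {K : ℝ} (hK : 0 < K)
    (hZ : ∀ ω, |Z ω| ≤ K * Real.log 2) : psi1Norm μ Z ≤ ENNReal.ofReal K := by
  refine psi1Norm_le_ofReal hK ?_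
  calc ∫⁻ ω, ENNReal.ofReal (exp (|Z ω| / K) - 1) ∂μ ≤ ∫⁻ _, 1 ∂μ := lintegral_mono fun ω => ?_
    _ = 1 := by simp
  have hexp : exp (|Z ω| / K) ≤ 2 :=
    calc exp (|Z ω| / K) ≤ exp (Real.log 2) :=
          exp_le_exp.2 ((div_le_iff₀ hK).2 (by linarith [hZ ω]))
      _ = 2 := exp_log two_pos
  exact ENNReal.ofReal_le_one.2 (by linarith)

theorem psi1Norm_map {α : Type*} [MeasurableSpace α] {Y : Ω → α} {Z : α → ℝ}
    (hZ : Measurable Z) (hY : Measurable Y) :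
    psi1Norm (μ.map Y) Z = psi1Norm μ (fun ω => Z (Y ω)) := by
  unfold psi1Norm
  congr! 5 with K
  rw [lintegral_map ((hZ.abs.div_const _).exp.sub_const _).ennreal_ofReal hY]

end Psi1Norm

theorem exp_abs_sub_add_exp_neg_add_le {t y m : ℝ} (ht : 0 ≤ t) (hy : 0 ≤ y) (hm : 0 ≤ m) :
    exp (t * |y - m|) + exp (-t * (y + m)) ≤ exp (t * (y - m)) + exp (-t * (y - m)) := by
  have hle : exp (-t * (y + m)) ≤ exp (-t * |y - m|) := by
    have : |y - m| ≤ y + m := by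
      simpa [abs_of_nonneg hy, abs_of_nonneg hm] using abs_sub y m
    exact exp_le_exp.2 (by nlinarith)
  rcases abs_choice (y - m) with h | h <;> rw [h] at hle ⊢
  · linarith
  · rw [neg_mul_neg] at hle; rw [← neg_mul_comm]; linarith

theorem hasSum_poisson_mul_exp (r : ℝ≥0) (t s : ℝ) :
    HasSum (fun k : ℕ => exp (-r) * r ^ k / (k)! * exp (t * (k - s)))
      (exp (r * (exp t - 1) - t * s)) := by
  have h := (NormedSpace.expSeries_div_hasSum_exp ((r : ℝ) * exp t)).mul_left
    (exp (-r - t * s))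
  rw [← exp_eq_exp_ℝ, ← exp_add] at h
  have hterm : (fun k : ℕ => exp (-r) * r ^ k / (k)! * exp (t * (k - s)))
      = fun k : ℕ => exp (-r - t * s) * ((r * exp t) ^ k / (k)!) := by
    funext k
    rw [mul_pow, ← exp_nat_mul, mul_sub, exp_sub, exp_sub, mul_comm t]
    field_simp
  rw [hterm, show r * (exp t - 1) - t * s = -r - t * s + r * exp t by ring]
  exact h

theorem exp_sub_one_sub_le_of_abs_le_half {x : ℝ} (hx : |x| ≤ 1 / 2) : exp x - 1 - x ≤ 11 / 18 * x ^ 2 := by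
  -- third-order Taylor bound: `|exp x - (1 + x + x ^ 2 / 2)| ≤ 2 / 9 * |x| ^ 3`
  have h := exp_bound (hx.trans (by norm_num)) (n := 3) (by norm_num)
  simp only [Finset.sum_range_succ, Finset.sum_range_zero] at h
  norm_num [Nat.factorial] at h
  have hx2 : |x| ^ 3 ≤ 1 / 2 * x ^ 2 := by
    rw [pow_succ, ← sq_abs x]; nlinarith [sq_nonneg |x|]
  have := (abs_le.1 h).2
  nlinarith

theorem exp_add_exp_sub_exp_le_two {a m : ℝ} (ha : 0 ≤ a) (ha' : a ≤ 1 / 2) (hm : 0 ≤ m)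
    (ham : a * m ≤ 7 / 20) :
    exp (m * (exp a - 1 - a)) + exp (m * (exp (-a) - 1 + a))
      - exp (m * (exp (-a) - 1 - a)) ≤ 2 := by
  have hexp : ∀ x : ℝ, x ≤ 1 / 8 → exp x ≤ 8 / 7 := fun x hx =>
    calc exp x ≤ exp (1 / 8) := exp_le_exp.2 hx
      _ ≤ 1 / (1 - 1 / 8) := exp_bound_div_one_sub_of_interval (by norm_num) (by norm_num)
      _ = 8 / 7 := by norm_num
  have hsq : m * (11 / 18 * a ^ 2) ≤ 1 / 8 := by nlinarith
  have h₁ : exp (m * (exp a - 1 - a)) ≤ 8 / 7 := by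
    refine hexp _ (le_trans ?_ hsq)
    exact mul_le_mul_of_nonneg_left (exp_sub_one_sub_le_of_abs_le_half (by rwa [abs_of_nonneg ha])) hm
  have h₂ : exp (m * (exp (-a) - 1 + a)) ≤ 8 / 7 := by
    refine hexp _ (le_trans ?_ hsq)
    have := exp_sub_one_sub_le_of_abs_le_half (x := -a) (by rwa [abs_neg, abs_of_nonneg ha])
    rw [sub_neg_eq_add, neg_sq] at this
    exact mul_le_mul_of_nonneg_left this hm
  have h₃ : 3 / 10 ≤ exp (m * (exp (-a) - 1 - a)) := by
    have := add_one_le_exp (-a)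
    have := add_one_le_exp (m * (exp (-a) - 1 - a))
    nlinarith
  linarith

theorem two_le_one_add_two_div_exp_one_mul_log_two : 2 ≤ 1 + 2 / (exp 1 * Real.log 2) := by
  have hpos : 0 < exp 1 * Real.log 2 := mul_pos (exp_pos 1) (log_pos one_lt_two)
  have hle : exp 1 * Real.log 2 ≤ 2 := by
    nlinarith [exp_one_lt_d9, log_two_lt_d9, exp_pos 1, log_pos one_lt_two]
  linarith [(one_le_div hpos).2 hle]

theorem lintegral_poissonMeasure_le_of_hasSum (r : ℝ≥0) {f g : ℕ → ℝ} {S : ℝ}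
    (hf : ∀ k, 0 ≤ f k) (hfg : ∀ k, f k ≤ g k)
    (hg : HasSum (fun k => exp (-r) * r ^ k / (k)! * g k) S) :
    ∫⁻ k, ENNReal.ofReal (f k) ∂poissonMeasure r ≤ ENNReal.ofReal S := by
  have hw : ∀ k : ℕ, 0 ≤ exp (-r) * r ^ k / (k)! := fun k => by positivity
  rw [lintegral_countable']
  calc ∑' k, ENNReal.ofReal (f k) * poissonMeasure r {k}
      = ∑' k, ENNReal.ofReal (exp (-r) * r ^ k / (k)! * f k) := by
        refine tsum_congr fun k => ?_
        rw [poissonMeasure_singleton, mul_comm, ENNReal.ofReal_mul (hw k)]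
    _ ≤ ∑' k, ENNReal.ofReal (exp (-r) * r ^ k / (k)! * g k) :=
        ENNReal.tsum_le_tsum fun k =>
          ENNReal.ofReal_le_ofReal (mul_le_mul_of_nonneg_left (hfg k) (hw k))
    _ = ENNReal.ofReal S := by
        rw [← ENNReal.ofReal_tsum_of_nonneg
          (fun k => mul_nonneg (hw k) ((hf k).trans (hfg k))) hg.summable, hg.tsum_eq]

theorem psi1Norm_poissonMeasure_sub_le (r : ℝ≥0) {K : ℝ} (hK : 2 ≤ K) (hrK : 20 * r ≤ 7 * K) :
    psi1Norm (poissonMeasure r) (fun k : ℕ => (k : ℝ) - r) ≤ ENNReal.ofReal K := by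
  have hKpos : 0 < K := by linarith
  have ha : 0 ≤ K⁻¹ := inv_nonneg.2 hKpos.le
  have ha' : K⁻¹ ≤ 1 / 2 := by rw [one_div]; exact inv_anti₀ two_pos hK
  have har : K⁻¹ * r ≤ 7 / 20 := by rw [inv_mul_le_iff₀ hKpos]; linarith
  have hmgf := ((((hasSum_poisson_mul_exp r K⁻¹ r).add (hasSum_poisson_mul_exp r (-K⁻¹) r)).sub
    (hasSum_poisson_mul_exp r (-K⁻¹) (-r))).sub (hasSum_one_poissonMeasure r)).congr_fun
    (g := fun k : ℕ => exp (-r) * r ^ k / (k)! * (exp (K⁻¹ * (k - r)) + exp (-K⁻¹ * (k - r))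
      - exp (-K⁻¹ * (k + r)) - 1)) fun k => by ring_nf
  refine psi1Norm_le_ofReal hKpos ((lintegral_poissonMeasure_le_of_hasSum r
    (fun k => sub_nonneg.2 (one_le_exp (by positivity))) (fun k => ?_) hmgf).trans ?_)
  · have := exp_abs_sub_add_exp_neg_add_le ha (Nat.cast_nonneg k) r.coe_nonneg
    rw [div_eq_inv_mul]
    linarith [exp_pos (-K⁻¹ * (k + r))]
  · rw [ENNReal.ofReal_le_one]
    have := exp_add_exp_sub_exp_le_two ha ha' r.coe_nonneg har
    ring_nf at this ⊢
    linarith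

/-- ψ₁-Orlicz norm bounds for centered Poisson and Bernoulli variables. -/
theorem stmt_9 {Ω : Type*} [MeasurableSpace Ω] (μ : Measure Ω) [IsProbabilityMeasure μ] :
    (∀ m : ℝ, 0 < m → ∀ Y : Ω → ℕ, Measurable Y →
      μ.map Y = poissonMeasure m.toNNReal →
      psi1Norm μ (fun ω => (Y ω : ℝ) - m)
        ≤ ENNReal.ofReal ((1 + 2 / (Real.exp 1 * Real.log 2)) * (1 + m / Real.log 2))) ∧
    (∀ q : ℝ, 0 ≤ q → q ≤ 1 → ∀ Y : Ω → Bool, Measurable Y →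
      μ {ω | Y ω = true} = ENNReal.ofReal q →
      psi1Norm μ (fun ω => (if Y ω then (1 : ℝ) else 0) - q)
        ≤ ENNReal.ofReal
            ((1 + 2 / (Real.exp 1 * Real.log 2)) * (1 + q * (1 - q) / Real.log 2))) := by
  have hc := two_le_one_add_two_div_exp_one_mul_log_two
  have hlog₀ : 0 < Real.log 2 := log_pos one_lt_two
  have hlog₁ : Real.log 2 < 7 / 10 := by linarith [log_two_lt_d9]
  refine ⟨fun m hm Y hY hmap => ?_, fun q hq₀ hq₁ Y _ _ => ?_⟩
  · have hm' : ((m.toNNReal : ℝ≥0) : ℝ) = m := Real.coe_toNNReal m hm.le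
    have hx : 0 ≤ m / Real.log 2 := div_nonneg hm.le hlog₀.le
    have hmx : 20 / 7 * m ≤ 2 * (m / Real.log 2) := by
      rw [mul_div_assoc', le_div_iff₀ hlog₀]; nlinarith
    have h := psi1Norm_poissonMeasure_sub_le m.toNNReal
      (K := (1 + 2 / (exp 1 * Real.log 2)) * (1 + m / Real.log 2)) (by nlinarith)
      (by rw [hm']; nlinarith)
    rwa [hm', ← hmap, psi1Norm_map measurable_from_nat hY] at h
  · have hx : 0 ≤ q * (1 - q) / Real.log 2 :=
      div_nonneg (mul_nonneg hq₀ (sub_nonneg.2 hq₁)) hlog₀.le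
    have hK : 2 ≤ (1 + 2 / (exp 1 * Real.log 2)) * (1 + q * (1 - q) / Real.log 2) := by
      nlinarith
    refine psi1Norm_le_of_abs_le (by linarith) fun ω => ?_
    have : |(if Y ω then (1 : ℝ) else 0) - q| ≤ 1 := by
      rw [abs_le]; split_ifs <;> constructor <;> linarith
    nlinarith [log_two_gt_d9]
end

section
/- For any θ₀ ∈ ℝ^p, P(1/4 ≤ n^{−1}·∑_{i=1}^n exp(X_iᵀθ₀) ≤ 2·exp(‖θ₀‖₂²)) ≥ 1 − 1/n − exp(−n/24). -/
/-!
Each row contributes `W_i = exp (X_i ⬝ θ₀)` with `X_i ⬝ θ₀ ∼ N(0, ‖θ₀‖²)`, so the `W_i` are i.i.d.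
log-normal with mean `exp (‖θ₀‖² / 2)` and variance at most `exp (2 ‖θ₀‖²)`. Chebyshev's inequality
for their sum bounds the upper deviation by `1 / n`. For the lower deviation, `W_i ≥ 1` whenever
`X_i ⬝ θ₀ ≥ 0`, which by symmetry happens with probability at least `1 / 2`; so a mean below `1 / 4`
forces fewer than `n / 4` successes among `n` such independent trials, which Hoeffding's inequality
bounds by `exp (-n / 8)`.
-/

open MeasureTheory ProbabilityTheory Real

/-- The law of an `n × p` matrix with i.i.d. standard normal entries. -/
noncomputable def gaussMat (n p : ℕ) : Measure (Fin n → Fin p → ℝ) :=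
  Measure.pi fun _ : Fin n => Measure.pi fun _ : Fin p => gaussianReal 0 1

open scoped NNReal

section Gaussian

variable {v : ℝ≥0}

lemma map_pi_gaussianReal_sum_mul {ι : Type*} [Fintype ι] (θ : ι → ℝ) :
    (Measure.pi fun _ : ι => gaussianReal 0 1).map (fun y => ∑ j, y j * θ j) =
      gaussianReal 0 (∑ j, θ j ^ 2).toNNReal := by
  set P := Measure.pi fun _ : ι => gaussianReal 0 1
  have hcoord (j : ι) : HasLaw (fun y : ι → ℝ => y j) (gaussianReal 0 1) P :=
    ⟨(measurable_pi_apply j).aemeasurable, (measurePreserving_eval _ j).map_eq⟩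
  have hlaw : HasGaussianLaw (fun y : ι → ℝ => ∑ j, y j * θ j) P := by
    refine iIndepFun.hasGaussianLaw_fun_sum (X := fun j (y : ι → ℝ) => y j * θ j) (fun j => ?_)
      (iIndepFun_pi (X := fun j (t : ℝ) => t * θ j) fun _ => by fun_prop)
    exact ((hcoord j).hasGaussianLaw.fun_smul (θ j)).congr
      (ae_of_all _ fun y => by simp [mul_comm])
  rw [hlaw.map_eq_gaussianReal]
  congr 1
  · rw [integral_finsetSum _ fun j _ => (hcoord j).hasGaussianLaw.integrable.mul_const _]
    simp [integral_mul_const, (hcoord _).integral_eq]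
  · have hvar := variance_sum_pi (μ := fun _ : ι => gaussianReal 0 1)
      (X := fun j (t : ℝ) => t * θ j) fun j => (memLp_id_gaussianReal 2).mul_const (θ j)
    simp only [variance_mul_const, variance_fun_id_gaussianReal, NNReal.coe_one, one_mul] at hvar
    rw [← hvar]
    congr 2
    ext y
    simp

lemma integral_exp_mul_gaussianReal (t : ℝ) :
    ∫ x, rexp (t * x) ∂gaussianReal 0 v = rexp (v * t ^ 2 / 2) := by
  simpa [mgf] using congrFun (mgf_id_gaussianReal (μ := 0) (v := v)) t

lemma integral_exp_gaussianReal : ∫ x, rexp x ∂gaussianReal 0 v = rexp (v / 2) := by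
  simpa using integral_exp_mul_gaussianReal (v := v) 1

lemma memLp_exp_gaussianReal : MemLp rexp 2 (gaussianReal 0 v) := by
  refine (memLp_two_iff_integrable_sq (by fun_prop)).2 ?_
  simpa [sq, ← Real.exp_add, ← two_mul] using integrable_exp_mul_gaussianReal (μ := 0) (v := v) 2

lemma variance_exp_gaussianReal : Var[rexp; gaussianReal 0 v] = rexp (2 * v) - rexp v := by
  rw [variance_eq_sub memLp_exp_gaussianReal]
  simp only [Pi.pow_apply, sq, ← Real.exp_add, ← two_mul, integral_exp_gaussianReal,
    integral_exp_mul_gaussianReal]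
  ring_nf

lemma half_le_gaussianReal_Ici : 1 / 2 ≤ (gaussianReal 0 v).real (Set.Ici 0) := by
  have hsymm : (gaussianReal 0 v).real (Set.Iic 0) = (gaussianReal 0 v).real (Set.Ici 0) := by
    conv_lhs => rw [← neg_zero, ← gaussianReal_map_neg]
    rw [map_measureReal_apply measurable_neg measurableSet_Iic]
    congr 1
    ext x
    simp
  have hcover :
      1 ≤ (gaussianReal 0 v).real (Set.Iic 0) + (gaussianReal 0 v).real (Set.Ici 0) := by
    rw [← probReal_univ (μ := gaussianReal 0 v), ← Set.Iic_union_Ici (a := (0 : ℝ))]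
    exact measureReal_union_le _ _
  linarith

end Gaussian

section IID

variable {ι α : Type*} [Fintype ι] [MeasurableSpace α] {ν : Measure α} [IsProbabilityMeasure ν]

lemma pi_meas_abs_sum_sub_ge_le {f : α → ℝ} (hf : MemLp f 2 ν) {c : ℝ} (hc : 0 < c) :
    Measure.pi (fun _ : ι => ν) {z | c ≤ |∑ i, f (z i) - Fintype.card ι * ν[f]|} ≤
      ENNReal.ofReal (Fintype.card ι * Var[f; ν] / c ^ 2) := by
  have hcoord (i : ι) : MemLp (fun z : ι → α => f (z i)) 2 (Measure.pi fun _ => ν) :=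
    hf.comp_measurePreserving (measurePreserving_eval _ i)
  have hsum : (∑ i, fun z : ι → α => f (z i)) = fun z => ∑ i, f (z i) := by
    ext z
    simp
  have hmean : ∫ z, ∑ i, f (z i) ∂(Measure.pi fun _ : ι => ν) = Fintype.card ι * ν[f] := by
    rw [integral_finsetSum _ fun i _ => (hcoord i).integrable one_le_two]
    have (i : ι) : ∫ z, f (z i) ∂(Measure.pi fun _ : ι => ν) = ν[f] :=
      (measurePreserving_eval (fun _ : ι => ν) i).hasLaw.integral_comp hf.aestronglyMeasurable
    simp [this]
  have hvar : Var[fun z : ι → α => ∑ i, f (z i); Measure.pi fun _ : ι => ν] =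
      Fintype.card ι * Var[f; ν] := by
    rw [← hsum, variance_sum_pi fun _ => hf]
    simp
  have hmem : MemLp (fun z : ι → α => ∑ i, f (z i)) 2 (Measure.pi fun _ : ι => ν) :=
    hsum ▸ memLp_finsetSum' _ fun i _ => hcoord i
  simpa [hmean, hvar] using meas_ge_le_variance_div_sq hmem hc

lemma pi_measureReal_sum_indicator_le_le {A : Set α} (hA : MeasurableSet A) {t : ℝ}
    (ht : 0 ≤ t) :
    (Measure.pi fun _ : ι => ν).real
        {z | ∑ i, A.indicator 1 (z i) ≤ Fintype.card ι * (ν.real A - t)} ≤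
      rexp (-2 * Fintype.card ι * t ^ 2) := by
  have hsubG : HasSubgaussianMGF (fun x => ν.real A - A.indicator 1 x) (1 / 4) ν := by
    have := hasSubgaussianMGF_of_mem_Icc (μ := ν) (X := fun x => -A.indicator (1 : α → ℝ) x)
      (a := -1) (b := 0) (by fun_prop) (ae_of_all _ fun x => by by_cases hx : x ∈ A <;> simp [hx])
    convert this using 2 with x
    · simp only [integral_neg, integral_indicator_one hA, sub_neg_eq_add]
      ring
    · norm_num
  have hdev (i : ι) : HasSubgaussianMGF (fun z => ν.real A - A.indicator 1 (z i)) (1 / 4)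
      (Measure.pi fun _ : ι => ν) :=
    .of_map (X := fun x => ν.real A - A.indicator 1 x) (measurable_pi_apply i).aemeasurable
      (by rw [(measurePreserving_eval _ i).map_eq]; exact hsubG)
  have hoeffding := HasSubgaussianMGF.measure_sum_ge_le_of_iIndepFun (s := Finset.univ)
    (iIndepFun_pi (μ := fun _ : ι => ν) (X := fun _ x => ν.real A - A.indicator 1 x)
      fun _ => by fun_prop)
    (fun i _ => hdev i) (ε := Fintype.card ι * t) (by positivity)
  have hexp : -(Fintype.card ι * t) ^ 2 / (2 * ↑(∑ _i : ι, (1 / 4 : ℝ≥0))) =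
      -2 * Fintype.card ι * t ^ 2 := by
    rcases eq_or_ne (Fintype.card ι : ℝ) 0 with h | h
    · simp [h]
    · simp only [one_div, Finset.sum_const, Finset.card_univ, nsmul_eq_mul, NNReal.coe_mul,
        NNReal.coe_natCast, NNReal.coe_inv, NNReal.coe_ofNat, neg_mul]
      field_simp
      ring
  rw [← hexp]
  convert hoeffding using 2
  ext z
  simp only [Set.mem_ofPred_eq, Finset.sum_sub_distrib, Finset.sum_const, Finset.card_univ,
    nsmul_eq_mul]
  constructor <;> intro h <;> linarith

end IID

section LogNormal

variable {ι : Type*} [Fintype ι] (v : ℝ≥0)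

lemma pi_gaussianReal_sum_exp_gt_le [Nonempty ι] :
    Measure.pi (fun _ : ι => gaussianReal 0 v)
        {z | 2 * Fintype.card ι * rexp v < ∑ i, rexp (z i)} ≤
      ENNReal.ofReal (1 / Fintype.card ι) := by
  set N : ℝ := (Fintype.card ι : ℝ)
  have hN : 0 < N := by positivity
  have hmean_le : rexp (v / 2) ≤ rexp v := exp_le_exp.2 (by linarith [v.2])
  calc _ ≤ Measure.pi (fun _ : ι => gaussianReal 0 v)
        {z | N * rexp v ≤ |∑ i, rexp (z i) - N * ∫ x, rexp x ∂gaussianReal 0 v|} := by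
        refine measure_mono fun z (hz : 2 * N * rexp v < ∑ i, rexp (z i)) => ?_
        rw [Set.mem_ofPred_eq, integral_exp_gaussianReal]
        refine le_trans ?_ (le_abs_self _)
        linarith [mul_le_mul_of_nonneg_left hmean_le hN.le]
    _ ≤ ENNReal.ofReal (N * Var[rexp; gaussianReal 0 v] / (N * rexp v) ^ 2) :=
        pi_meas_abs_sum_sub_ge_le memLp_exp_gaussianReal (by positivity)
    _ ≤ ENNReal.ofReal (1 / N) := by
        refine ENNReal.ofReal_le_ofReal ?_
        rw [variance_exp_gaussianReal, div_le_div_iff₀ (by positivity) hN]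
        have hsq : rexp (2 * v) = rexp v ^ 2 := by rw [← Real.exp_nat_mul]; norm_num
        rw [hsq]
        nlinarith [mul_pos (mul_pos hN hN) (exp_pos v)]

lemma pi_gaussianReal_sum_exp_lt_le :
    Measure.pi (fun _ : ι => gaussianReal 0 v) {z | ∑ i, rexp (z i) < Fintype.card ι / 4} ≤
      ENNReal.ofReal (rexp (-Fintype.card ι / 8)) := by
  set N : ℝ := (Fintype.card ι : ℝ)
  set q := (gaussianReal 0 v).real (Set.Ici 0)
  have hq : 1 / 2 ≤ q := half_le_gaussianReal_Ici
  have hind_le (x : ℝ) : (Set.Ici 0).indicator 1 x ≤ rexp x :=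
    Set.indicator_apply_le' (fun hx => by simpa using one_le_exp hx) fun _ => (exp_pos x).le
  calc _ ≤ Measure.pi (fun _ : ι => gaussianReal 0 v)
        {z | ∑ i, (Set.Ici 0).indicator 1 (z i) ≤ N * (q - 1 / 4)} := by
        refine measure_mono fun z (hz : ∑ i, rexp (z i) < N / 4) => ?_
        have := Finset.sum_le_sum fun i (_ : i ∈ Finset.univ) => hind_le (z i)
        rw [Set.mem_ofPred_eq]
        linarith [mul_nonneg (Nat.cast_nonneg _ : (0 : ℝ) ≤ N) (sub_nonneg.2 hq)]
    _ ≤ _ := by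
        rw [← ofReal_measureReal]
        refine ENNReal.ofReal_le_ofReal ((pi_measureReal_sum_indicator_le_le measurableSet_Ici
          (by norm_num)).trans_eq ?_)
        congr 1
        ring

lemma pi_gaussianReal_mean_exp_notMem_Icc_le [Nonempty ι] :
    Measure.pi (fun _ : ι => gaussianReal 0 v)
        {z | (Fintype.card ι : ℝ)⁻¹ * ∑ i, rexp (z i) ∉ Set.Icc (1 / 4) (2 * rexp v)} ≤
      ENNReal.ofReal (1 / Fintype.card ι) + ENNReal.ofReal (rexp (-Fintype.card ι / 24)) := by
  set N : ℝ := (Fintype.card ι : ℝ)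
  have hN : 0 < N := by positivity
  have hsub : {z : ι → ℝ | N⁻¹ * ∑ i, rexp (z i) ∉ Set.Icc (1 / 4) (2 * rexp v)} ⊆
      {z | 2 * N * rexp v < ∑ i, rexp (z i)} ∪ {z | ∑ i, rexp (z i) < N / 4} := by
    intro z hz
    simp only [Set.mem_ofPred_eq, Set.mem_Icc, not_and_or, not_le] at hz
    rw [inv_mul_lt_iff₀ hN, lt_inv_mul_iff₀ hN] at hz
    simp only [Set.mem_union, Set.mem_ofPred_eq]
    rcases hz with h | h
    · exact Or.inr (by linarith)
    · exact Or.inl (by linarith)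
  calc _ ≤ _ := measure_mono hsub
    _ ≤ _ := measure_union_le _ _
    _ ≤ _ := add_le_add (pi_gaussianReal_sum_exp_gt_le v) <|
        (pi_gaussianReal_sum_exp_lt_le v).trans <|
          ENNReal.ofReal_le_ofReal (exp_le_exp.2 (by linarith))

end LogNormal

theorem stmt_11_general (n p : ℕ) (hn : 1 ≤ n) (θ₀ : Fin p → ℝ) :
    1 - ENNReal.ofReal (1 / n + Real.exp (-(n : ℝ) / 24)) ≤
      gaussMat n p {x |
        1 / 4 ≤ (n : ℝ)⁻¹ * ∑ i, Real.exp (∑ j, x i j * θ₀ j) ∧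
        (n : ℝ)⁻¹ * ∑ i, Real.exp (∑ j, x i j * θ₀ j) ≤ 2 * Real.exp (∑ j, θ₀ j ^ 2)} := by
  have : Nonempty (Fin n) := ⟨⟨0, hn⟩⟩
  have : IsProbabilityMeasure (gaussMat n p) := by unfold gaussMat; infer_instance
  set v := (∑ j, θ₀ j ^ 2).toNNReal
  have hv : (v : ℝ) = ∑ j, θ₀ j ^ 2 := Real.coe_toNNReal _ (by positivity)
  have hmap : (gaussMat n p).map (fun x i => ∑ j, x i j * θ₀ j) =
      Measure.pi fun _ => gaussianReal 0 v := by
    rw [gaussMat, Measure.pi_map_pi (f := fun _ (y : Fin p → ℝ) => ∑ j, y j * θ₀ j)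
      fun _ => Measurable.aemeasurable (by fun_prop)]
    simp_rw [map_pi_gaussianReal_sum_mul]
    rfl
  -- Bounding the bad event through `le_map_apply` needs no measurability of it.
  have hbad := (Measure.le_map_apply (μ := gaussMat n p) (Measurable.aemeasurable (by fun_prop))
    _).trans (hmap ▸ pi_gaussianReal_mean_exp_notMem_Icc_le v)
  rw [Fintype.card_fin] at hbad
  rw [tsub_le_iff_right, ENNReal.ofReal_add (by positivity) (by positivity)]
  refine measure_univ.symm.trans_le <| (measure_univ_le_add_compl _).trans <|
    add_le_add le_rfl ((measure_mono fun x hx => ?_).trans hbad)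
  simpa [hv, Set.mem_Icc] using hx

/-- concentration of the empirical mean of log-normal variables. -/
theorem stmt_11 (n p : ℕ) (hn : 1 ≤ n) (hp : 1 ≤ p) (θ₀ : Fin p → ℝ) :
    1 - ENNReal.ofReal (1 / n + Real.exp (-(n : ℝ) / 24)) ≤
      gaussMat n p {x |
        1 / 4 ≤ (n : ℝ)⁻¹ * ∑ i, Real.exp (∑ j, x i j * θ₀ j) ∧
        (n : ℝ)⁻¹ * ∑ i, Real.exp (∑ j, x i j * θ₀ j) ≤ 2 * Real.exp (∑ j, θ₀ j ^ 2)} :=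
  stmt_11_general n p hn θ₀
end
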